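/- Any two simple closed curves on a surface that intersect at most k times (k ≥ 1) are at distance at most 2·log₂(k) + 2 in the curve graph of the surface. Abstract version: if a graph G on a set of curves has the property that curves intersecting at most once are adjacent, and a surgery reduces intersection number from k to at most ⌈k/2⌉ while moving distance at most 2, then curves intersecting at most k times are at distance at most 2·log₂(k) + 2. -/

import Mathlib

/-! Each surgery step halves the intersection bound (rounding up) at the cost of 2 in distance,
and `⌈log₂ k⌉` halvings bring the bound down to `1`, where curves are already at distance at
most `2`. -/

theorem dist_le_two_mul_clog_add_two {V : Type*} {d i : V → V → ℕ}
    (htri : ∀ α β γ, d α γ ≤ d α β + d β γ)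
    (hbase : ∀ α β, i α β ≤ 1 → d α β ≤ 2)
    (hsurg : ∀ α β, 2 ≤ i α β → ∃ γ, i α γ ≤ (i α β + 1) / 2 ∧ d γ β ≤ 2)
    (k : ℕ) {α β : V} (hk : i α β ≤ k) : d α β ≤ 2 * Nat.clog 2 k + 2 := by
  induction k using Nat.strong_induction_on generalizing β with
  | _ k ih =>
    by_cases hone : i α β ≤ 1
    · exact (hbase α β hone).trans (Nat.le_add_left 2 _)
    obtain ⟨γ, hαγ, hγβ⟩ := hsurg α β (by omega)
    have hγ : d α γ ≤ 2 * Nat.clog 2 ((k + 1) / 2) + 2 :=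
      ih _ (by omega) (hαγ.trans (by omega))
    calc d α β ≤ d α γ + d γ β := htri α γ β
      _ ≤ 2 * (Nat.clog 2 ((k + 1) / 2) + 1) + 2 := by omega
      _ = 2 * Nat.clog 2 k + 2 := by
        rw [Nat.clog_of_two_le one_lt_two (by omega : 2 ≤ k)]; rfl

theorem curve_graph_log_distance_bound_general {V : Type*} (d : V → V → ℕ) (i : V → V → ℕ)
    (htri : ∀ α β γ, d α γ ≤ d α β + d β γ)
    (hbase : ∀ α β, i α β ≤ 1 → d α β ≤ 2)
    (hsurg : ∀ α β, 2 ≤ i α β → ∃ γ, i α γ ≤ (i α β + 1) / 2 ∧ d γ β ≤ 2) :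
    ∀ k : ℕ, 1 ≤ k → ∀ α β, i α β ≤ k → d α β ≤ 2 * Nat.clog 2 k + 2 :=
  fun k _ _ _ hk => dist_le_two_mul_clog_add_two htri hbase hsurg k hk

/-- abstract surgery argument: if curves intersecting at most once are
at distance at most 2, and surgery reduces intersection number from `k ≥ 2` to at most
`⌈k/2⌉` while moving distance at most 2, then curves intersecting at most `k ≥ 1` times
are at distance at most `2⌈log₂ k⌉ + 2`. -/
theorem curve_graph_log_distance_bound {V : Type*} (d : V → V → ℕ) (i : V → V → ℕ)
    (hsymm : ∀ α β, d α β = d β α)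
    (htri : ∀ α β γ, d α γ ≤ d α β + d β γ)
    (hbase : ∀ α β, i α β ≤ 1 → d α β ≤ 2)
    (hsurg : ∀ α β, 2 ≤ i α β → ∃ γ, i α γ ≤ (i α β + 1) / 2 ∧ d γ β ≤ 2) :
    ∀ k : ℕ, 1 ≤ k → ∀ α β, i α β ≤ k → d α β ≤ 2 * Nat.clog 2 k + 2 :=
  curve_graph_log_distance_bound_general d i htri hbase hsurg
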